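/- arXiv:math/9811133 — 2 statements merged into one kernel-verified Lean document; each statement's English description precedes it below -/
import Mathlib

section
/- For every triple v = (v₁,v₂,v₃) of nonzero vectors in Z^3 with |det(v₁,v₂,v₃)| > 1, there exists a nonzero w ∈ Z^3 such that |det(w,vᵢ,vⱼ)| < |det(v₁,v₂,v₃)| for all 1 ≤ i < j ≤ 3. -/
/-!
Let `M` be the integer matrix with columns `vᵢ` and `D = det M`. Since `|D| > 1`, the rational
inverse `M⁻¹` is not integral (otherwise `D` would be a unit of `ℤ`), so some column
`c = M⁻¹ eₖ` has a non-integral entry. The integer vector `w = eₖ - M ⌊c⌋ = M (c - ⌊c⌋)` is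
then a nonzero lattice point of the half-open parallelepiped spanned by the `vᵢ`, and by
Cramer's rule replacing the `j`-th column of `M` by `w` multiplies the determinant by the
fractional part `cⱼ - ⌊cⱼ⌋ ∈ [0, 1)`.
-/

/-- `idet3 u v w` is the determinant of the 3×3 integer matrix with columns `u`, `v`, `w`. -/
def idet3 (u v w : Fin 3 → ℤ) : ℤ := ((Matrix.of ![u, v, w]).transpose).det

namespace Matrix

variable {n : Type*} [Fintype n] [DecidableEq n]

theorem cramer_mulVec_self {R : Type*} [CommRing R] (A : Matrix n n R) (a : n → R) :
    A.cramer (A *ᵥ a) = A.det • a := by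
  rw [cramer_eq_adjugate_mulVec, mulVec_mulVec, adjugate_mul, smul_mulVec, one_mulVec]

theorem det_updateCol_mulVec {R : Type*} [CommRing R] (A : Matrix n n R) (a : n → R) (j : n) :
    (A.updateCol j (A *ᵥ a)).det = a j * A.det := by
  rw [← cramer_apply, cramer_mulVec_self, Pi.smul_apply, smul_eq_mul, mul_comm]

variable {M : Matrix n n ℤ}

local notation "Mℚ" => M.map ((↑) : ℤ → ℚ)

theorem isUnit_det_map_intCast (h : M.det ≠ 0) : IsUnit (Mℚ).det := by
  rw [← Int.cast_det, isUnit_iff_ne_zero]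
  exact_mod_cast h

theorem exists_fract_inv_map_intCast_ne_zero (h₀ : M.det ≠ 0) (h₁ : ¬IsUnit M.det) :
    ∃ i k, Int.fract ((Mℚ)⁻¹ i k) ≠ 0 := by
  by_contra! hint
  have hfloor : ((Mℚ)⁻¹.map (fun x => ⌊x⌋)).map ((↑) : ℤ → ℚ) = (Mℚ)⁻¹ := by
    ext i k
    exact (sub_eq_zero.mp (hint i k)).symm
  apply h₁
  refine isUnit_det_of_right_inverse (B := (Mℚ)⁻¹.map (fun x => ⌊x⌋)) ?_
  have hinv :
      (M * (Mℚ)⁻¹.map (fun x => ⌊x⌋)).map ((↑) : ℤ → ℚ) = (1 : Matrix n n ℤ).map (↑) := by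
    rw [map_mul_intCast, hfloor, mul_nonsing_inv _ (isUnit_det_map_intCast h₀),
      Matrix.map_one _ Int.cast_zero Int.cast_one]
  exact map_injective Int.cast_injective hinv

theorem map_intCast_mul_fract_inv (h₀ : M.det ≠ 0) :
    Mℚ * (Mℚ)⁻¹.map Int.fract = (1 - M * (Mℚ)⁻¹.map (fun x => ⌊x⌋)).map (↑) := by
  have hfract : (Mℚ)⁻¹.map Int.fract = (Mℚ)⁻¹ - ((Mℚ)⁻¹.map (fun x => ⌊x⌋)).map (↑) := rfl
  rw [hfract, Matrix.mul_sub, mul_nonsing_inv _ (isUnit_det_map_intCast h₀),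
    Matrix.map_sub _ Int.cast_sub, map_mul_intCast, Matrix.map_one _ Int.cast_zero Int.cast_one]

theorem abs_det_updateCol_lt {w : n → ℤ} {a : n → ℚ} (hw : Mℚ *ᵥ a = (↑) ∘ w)
    (h₀ : M.det ≠ 0) (j : n) (ha₀ : 0 ≤ a j) (ha₁ : a j < 1) :
    |(M.updateCol j w).det| < |M.det| := by
  have hdet : ((M.updateCol j w).det : ℚ) = a j * M.det := by
    rw [Int.cast_det, Int.cast_det, map_updateCol, ← hw, det_updateCol_mulVec]
  have hpos : (0 : ℚ) < |(M.det : ℚ)| := abs_pos.mpr (by exact_mod_cast h₀)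
  have : |((M.updateCol j w).det : ℚ)| < |(M.det : ℚ)| := by
    rw [hdet, abs_mul, abs_of_nonneg ha₀]
    exact mul_lt_of_lt_one_left hpos ha₁
  exact_mod_cast this

theorem exists_ne_zero_abs_det_updateCol_lt (h : 1 < |M.det|) :
    ∃ w : n → ℤ, w ≠ 0 ∧ ∀ j, |(M.updateCol j w).det| < |M.det| := by
  have h₀ : M.det ≠ 0 := abs_pos.mp (one_pos.trans h)
  have h₁ : ¬IsUnit M.det := by rw [Int.isUnit_iff_abs_eq]; exact h.ne'
  obtain ⟨i, k, hik⟩ := exists_fract_inv_map_intCast_ne_zero h₀ h₁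
  set a : n → ℚ := fun i => Int.fract ((Mℚ)⁻¹ i k)
  set w : n → ℤ := fun i => (1 - M * (Mℚ)⁻¹.map (fun x => ⌊x⌋)) i k
  have hw : Mℚ *ᵥ a = (↑) ∘ w := funext fun i =>
    congrFun (congrFun (map_intCast_mul_fract_inv h₀) i) k
  refine ⟨w, ?_, fun j =>
    abs_det_updateCol_lt hw h₀ j (Int.fract_nonneg _) (Int.fract_lt_one _)⟩
  intro hw0
  have ha : a = 0 :=
    eq_zero_of_mulVec_eq_zero (isUnit_det_map_intCast h₀).ne_zero (by ext; simp [hw, hw0])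
  exact hik (congrFun ha i)

end Matrix

theorem idet3_eq_det_updateCol (v₁ v₂ v₃ w : Fin 3 → ℤ) :
    idet3 w v₂ v₃ = ((Matrix.of ![v₁, v₂, v₃]).transpose.updateCol 0 w).det ∧
      idet3 w v₁ v₃ = -((Matrix.of ![v₁, v₂, v₃]).transpose.updateCol 1 w).det ∧
      idet3 w v₁ v₂ = ((Matrix.of ![v₁, v₂, v₃]).transpose.updateCol 2 w).det := by
  simp only [idet3, Matrix.det_transpose, Matrix.det_fin_three, Matrix.of_apply,
    Matrix.transpose_apply, Matrix.updateCol_apply, Matrix.cons_val_zero, Matrix.cons_val_one,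
    Matrix.cons_val_two, Matrix.tail_cons, Matrix.head_cons, Fin.isValue, Fin.reduceEq, if_true,
    if_false]
  exact ⟨by ring, by ring, by ring⟩

theorem stmt9_general (v₁ v₂ v₃ : Fin 3 → ℤ)
    (hdet : 1 < |idet3 v₁ v₂ v₃|) :
    ∃ w : Fin 3 → ℤ, w ≠ 0 ∧
      |idet3 w v₂ v₃| < |idet3 v₁ v₂ v₃| ∧
      |idet3 w v₁ v₃| < |idet3 v₁ v₂ v₃| ∧
      |idet3 w v₁ v₂| < |idet3 v₁ v₂ v₃| := by
  obtain ⟨w, hw, hlt⟩ := Matrix.exists_ne_zero_abs_det_updateCol_lt hdet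
  obtain ⟨h₀, h₁, h₂⟩ := idet3_eq_det_updateCol v₁ v₂ v₃ w
  refine ⟨w, hw, ?_, ?_, ?_⟩
  · rw [h₀]; exact hlt 0
  · rw [h₁, abs_neg]; exact hlt 1
  · rw [h₂]; exact hlt 2

/-- Ash–Rudolph lemma for `SL₃(ℤ)`: for every triple `(v₁,v₂,v₃)` of nonzero integer
vectors with `|det(v₁,v₂,v₃)| > 1`, there is a nonzero `w ∈ ℤ³` with
`|det(w,vᵢ,vⱼ)| < |det(v₁,v₂,v₃)|` for all `1 ≤ i < j ≤ 3`. -/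
theorem stmt9 (v₁ v₂ v₃ : Fin 3 → ℤ) (h₁ : v₁ ≠ 0) (h₂ : v₂ ≠ 0) (h₃ : v₃ ≠ 0)
    (hdet : 1 < |idet3 v₁ v₂ v₃|) :
    ∃ w : Fin 3 → ℤ, w ≠ 0 ∧
      |idet3 w v₂ v₃| < |idet3 v₁ v₂ v₃| ∧
      |idet3 w v₁ v₃| < |idet3 v₁ v₂ v₃| ∧
      |idet3 w v₁ v₂| < |idet3 v₁ v₂ v₃| :=
  stmt9_general v₁ v₂ v₃ hdet
end

section
/- The barycenters realizing a flag of subsets are affinely independent: if ∅ ⊊ I₀ ⊊ I₁ ⊊ ⋯ ⊊ I_m ⊆ {0,…,k} is a strictly increasing chain of nonempty subsets, then the points b(I_j) = (Σ_{i∈I_j} e_i)/#I_j in R^{k+1} are affinely independent. -/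
/-!
Pick `a j ∈ I j` outside every earlier `I l` (possible because the chain is strict). The
coordinate at `a j` is nonzero on `b(I j)` and vanishes on `b(I l)` for `l < j`, so the
barycenters are even linearly independent, by a triangularity argument.
-/

/-- The barycenter `b(I) = (Σ_{i∈I} e_i)/#I` of the face of the standard simplex
corresponding to `I ⊆ {0,…,k}`, as a point of `ℝ^{k+1}`. -/
noncomputable def baryPt {k : ℕ} (I : Finset (Fin (k + 1))) : Fin (k + 1) → ℝ :=
  (I.card : ℝ)⁻¹ • ∑ i ∈ I, Pi.single i (1 : ℝ)

/- Applying `φ j` at the largest index `j` with nonzero coefficient isolates that coefficient. -/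
theorem linearIndependent_of_apply_eq_zero_of_lt {ι R M : Type*} [LinearOrder ι] [Ring R]
    [NoZeroDivisors R] [AddCommGroup M] [Module R M] {v : ι → M} (φ : ι → M →ₗ[R] R)
    (hdiag : ∀ j, φ j (v j) ≠ 0) (hlt : ∀ l j, l < j → φ j (v l) = 0) :
    LinearIndependent R v := by
  classical
  rw [linearIndependent_iff']
  intro s g hsum
  by_contra! hne
  set t := s.filter (g · ≠ 0)
  have ht : t.Nonempty := by simpa [t, Finset.filter_nonempty_iff] using hne
  set j := t.max' ht
  have hjt : j ∈ t := t.max'_mem ht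
  rw [Finset.mem_filter] at hjt
  have hφ : ∑ l ∈ s, g l * φ j (v l) = g j * φ j (v j) := by
    refine Finset.sum_eq_single_of_mem j hjt.1 fun l hl hlj => ?_
    by_cases hgl : g l = 0
    · rw [hgl, zero_mul]
    · have hle : l ≤ j := t.le_max' l (Finset.mem_filter.2 ⟨hl, hgl⟩)
      rw [hlt l j (lt_of_le_of_ne hle hlj), mul_zero]
  have hzero : g j * φ j (v j) = 0 := by
    simpa [hφ] using congrArg (φ j) hsum
  exact mul_ne_zero hjt.2 (hdiag j) hzero

theorem Finset.exists_mem_forall_lt_notMem {ι α : Type*} [LinearOrder ι] [PredOrder ι]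
    {I : ι → Finset α} (hI : StrictMono I) (j : ι) (hj : (I j).Nonempty) :
    ∃ a ∈ I j, ∀ l < j, a ∉ I l := by
  by_cases hmin : IsMin j
  · obtain ⟨a, ha⟩ := hj
    exact ⟨a, ha, fun l hl => absurd hl hmin.not_lt⟩
  · obtain ⟨a, ha, hna⟩ := Finset.exists_of_ssubset (hI (Order.pred_lt_of_not_isMin hmin))
    exact ⟨a, ha, fun l hl hal => hna (hI.monotone (Order.le_pred_of_lt hl) hal)⟩

theorem baryPt_apply {k : ℕ} (I : Finset (Fin (k + 1))) (i : Fin (k + 1)) :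
    baryPt I i = if i ∈ I then (I.card : ℝ)⁻¹ else 0 := by
  simp [baryPt, Finset.sum_apply, Pi.single_apply]

/-- The barycenters realizing a flag of subsets are affinely independent: if
`∅ ⊊ I₀ ⊊ I₁ ⊊ ⋯ ⊊ I_m ⊆ {0,…,k}` is a strictly increasing chain of nonempty subsets,
then the points `b(I_j)` in `ℝ^{k+1}` are affinely independent. -/
theorem stmt15 (k m : ℕ) (I : Fin (m + 1) → Finset (Fin (k + 1)))
    (hne : ∀ j, (I j).Nonempty) (hmono : StrictMono fun j => I j) :
    AffineIndependent ℝ (fun j => baryPt (I j)) := by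
  choose a ha hna using fun j => Finset.exists_mem_forall_lt_notMem hmono j (hne j)
  refine (linearIndependent_of_apply_eq_zero_of_lt
    (fun j => (LinearMap.proj (a j) : (Fin (k + 1) → ℝ) →ₗ[ℝ] ℝ)) ?_ ?_).affineIndependent
  · intro j
    simp [baryPt_apply, ha j, (hne j).card_ne_zero]
  · intro l j hlj
    simp [baryPt_apply, hna j l hlj]
end
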